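/- Let a, b > 0 and give four bodies equal masses μ_1 = μ_2 = μ_3 = μ_4 = μ with 4μ = 1. Then there exist x > 0 and y > 0 such that the points p_1 = (x, 0), p_2 = (0, y), p_3 = (−x, 0), p_4 = (0, −y) satisfy the anisotropic central configuration equations (for every i, a x_i = Σ_{j≠i} μ_j (x_i − x_j)/r_{ij}³ and b y_i = Σ_{j≠i} μ_j (y_i − y_j)/r_{ij}³, where r_{ij} = |p_i − p_j|), i.e. they form a rhombus symmetric with respect to both coordinate axes. Moreover: (1) the ratio of half-diagonals κ = y/x is the unique positive solution of (8κ³ + (κ√(1+κ²))³)/(8κ³ + (√(1+κ²))³) = a/b; (2) the side length r = √(x² + y²) satisfies r > (9μ/(4·min{a,b}))^{1/3}; and (3) in that range r is the unique solution of (2μ/(a r³ − 2μ))^{2/3} + (2μ/(b r³ − 2μ))^{2/3} = 4. -/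

import Mathlib

open Finset

abbrev E2 : Type := EuclideanSpace ℝ (Fin 2)

/-- The anisotropic central configuration equations for points `p_i = (x_i, y_i)`:
`a x_i = Σ_{j≠i} μ_j (x_i − x_j)/r_{ij}³` and `b y_i = Σ_{j≠i} μ_j (y_i − y_j)/r_{ij}³`. -/
def AnisoCC {k : ℕ} (a b : ℝ) (μ : Fin k → ℝ) (p : Fin k → E2) : Prop :=
  ∀ i, (a * p i 0 = ∑ j ∈ Finset.univ.filter (· ≠ i), μ j * (p i 0 - p j 0) / ‖p i - p j‖ ^ 3) ∧
       (b * p i 1 = ∑ j ∈ Finset.univ.filter (· ≠ i), μ j * (p i 1 - p j 1) / ‖p i - p j‖ ^ 3)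

/-- The point `(a, b)` of the Euclidean plane. -/
noncomputable def pt (a b : ℝ) : E2 := (WithLp.equiv 2 (Fin 2 → ℝ)).symm ![a, b]

/-!
For the rhombus `(±x, 0), (0, ±y)` with side `r`, symmetry reduces the equations to
`a = 2μ/r³ + μ/(4x³)` and `b = 2μ/r³ + μ/(4y³)`. Given `r` with `a r³, b r³ > 2μ`, these determine
`x` and `y`, and then `(2μ/(a r³ − 2μ))^{2/3} = 4x²/r²`, `(2μ/(b r³ − 2μ))^{2/3} = 4y²/r²`; so the
closing condition `x² + y² = r²` is exactly the side equation. Its left-hand side decreases strictly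
in `r` beyond the threshold `r₀`, exceeds `4` at `r₀` (the term of `min a b` equals `8^{2/3} = 4`
there) and is below `4` at `2r₀`, which gives a unique root. Dividing the two force equations
expresses `a/b` as the ratio function at `y/x`; written as `(8 + s³)/(8 + (s/κ)³)` with
`s = √(1 + κ²)`, its numerator increases and its denominator decreases, so it is injective.
-/

@[simp] lemma pt_apply_zero (u v : ℝ) : pt u v 0 = u := rfl

@[simp] lemma pt_apply_one (u v : ℝ) : pt u v 1 = v := rfl

lemma norm_pt_sub_pt (u v s t : ℝ) : ‖pt u v - pt s t‖ = √((u - s) ^ 2 + (v - t) ^ 2) := by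
  rw [EuclideanSpace.norm_eq, Fin.sum_univ_two]
  simp [pt, Real.norm_eq_abs, sq_abs]

lemma norm_pt_sub_pt_eq {u v s t d : ℝ} (h : (u - s) ^ 2 + (v - t) ^ 2 = d ^ 2) (hd : 0 ≤ d) :
    ‖pt u v - pt s t‖ = d := by
  rw [norm_pt_sub_pt, h, Real.sqrt_sq hd]

lemma anisoCC_rhombus {a b μ x y r : ℝ} (hx : 0 < x) (hy : 0 < y) (hr : 0 < r)
    (hxy : x ^ 2 + y ^ 2 = r ^ 2)
    (ha : a = 2 * μ / r ^ 3 + μ / (4 * x ^ 3)) (hb : b = 2 * μ / r ^ 3 + μ / (4 * y ^ 3)) :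
    AnisoCC a b (fun _ : Fin 4 => μ) ![pt x 0, pt 0 y, pt (-x) 0, pt 0 (-y)] := by
  have side {u v s t : ℝ} (h : (u - s) ^ 2 + (v - t) ^ 2 = x ^ 2 + y ^ 2) :
      ‖pt u v - pt s t‖ = r :=
    norm_pt_sub_pt_eq (h.trans hxy) hr.le
  have n01 : ‖pt x 0 - pt 0 y‖ = r := side (by ring)
  have n03 : ‖pt x 0 - pt 0 (-y)‖ = r := side (by ring)
  have n10 : ‖pt 0 y - pt x 0‖ = r := side (by ring)
  have n12 : ‖pt 0 y - pt (-x) 0‖ = r := side (by ring)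
  have n21 : ‖pt (-x) 0 - pt 0 y‖ = r := side (by ring)
  have n23 : ‖pt (-x) 0 - pt 0 (-y)‖ = r := side (by ring)
  have n30 : ‖pt 0 (-y) - pt x 0‖ = r := side (by ring)
  have n32 : ‖pt 0 (-y) - pt (-x) 0‖ = r := side (by ring)
  have n02 : ‖pt x 0 - pt (-x) 0‖ = 2 * x := norm_pt_sub_pt_eq (by ring) (by positivity)
  have n20 : ‖pt (-x) 0 - pt x 0‖ = 2 * x := norm_pt_sub_pt_eq (by ring) (by positivity)
  have n13 : ‖pt 0 y - pt 0 (-y)‖ = 2 * y := norm_pt_sub_pt_eq (by ring) (by positivity)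
  have n31 : ‖pt 0 (-y) - pt 0 y‖ = 2 * y := norm_pt_sub_pt_eq (by ring) (by positivity)
  intro i
  fin_cases i <;> constructor <;>
    · rw [Finset.filter_ne', Finset.sum_erase_eq_sub (Finset.mem_univ _), Fin.sum_univ_four]
      simp only [Matrix.cons_val_zero, Matrix.cons_val_one, Matrix.cons_val_two,
        Matrix.cons_val_three, Matrix.head_cons, Matrix.tail_cons, Fin.isValue,
        pt_apply_zero, pt_apply_one]
      norm_num [n01, n02, n03, n10, n12, n13, n20, n21, n23, n30, n31, n32]
      first
        | (rw [ha]; field_simp; ring)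
        | (rw [hb]; field_simp; ring)
        | (field_simp; ring)

noncomputable def rhombusRatio (κ : ℝ) : ℝ :=
  (8 * κ ^ 3 + (κ * √(1 + κ ^ 2)) ^ 3) / (8 * κ ^ 3 + (√(1 + κ ^ 2)) ^ 3)

lemma rhombusRatio_eq {κ : ℝ} (hκ : 0 < κ) :
    rhombusRatio κ = (8 + √(1 + κ ^ 2) ^ 3) / (8 + (√(1 + κ ^ 2) / κ) ^ 3) := by
  rw [rhombusRatio, div_eq_div_iff (by positivity) (by positivity)]
  field_simp

lemma rhombusRatio_strictMonoOn : StrictMonoOn rhombusRatio (Set.Ioi 0) := by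
  intro κ₁ hκ₁ κ₂ hκ₂ hlt
  rw [Set.mem_Ioi] at hκ₁ hκ₂
  rw [rhombusRatio_eq hκ₁, rhombusRatio_eq hκ₂]
  have hs : √(1 + κ₁ ^ 2) < √(1 + κ₂ ^ 2) := by gcongr
  have hu : √(1 + κ₂ ^ 2) / κ₂ < √(1 + κ₁ ^ 2) / κ₁ := by
    rw [div_lt_div_iff₀ hκ₂ hκ₁]
    apply lt_of_pow_lt_pow_left₀ 2 (by positivity)
    rw [mul_pow, mul_pow, Real.sq_sqrt (by positivity), Real.sq_sqrt (by positivity)]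
    nlinarith
  exact div_lt_div₀ (by gcongr) (by gcongr) (by positivity) (by positivity)

lemma rhombusRatio_of_side {μ x y r : ℝ} (hμ : 0 < μ) (hx : 0 < x) (hy : 0 < y) (hr : 0 < r)
    (hxy : x ^ 2 + y ^ 2 = r ^ 2) :
    rhombusRatio (y / x) = (2 * μ / r ^ 3 + μ / (4 * x ^ 3)) / (2 * μ / r ^ 3 + μ / (4 * y ^ 3)) := by
  have hs : √(1 + (y / x) ^ 2) = r / x := by
    rw [show 1 + (y / x) ^ 2 = (r / x) ^ 2 by field_simp; linear_combination hxy]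
    exact Real.sqrt_sq (by positivity)
  rw [rhombusRatio_eq (by positivity), hs, div_eq_div_iff (by positivity) (by positivity)]
  field_simp
  ring

lemma rpow_one_div_three_pow_three {q : ℝ} (hq : 0 ≤ q) : (q ^ ((1 : ℝ) / 3)) ^ 3 = q := by
  rw [one_div]
  exact_mod_cast Real.rpow_inv_natCast_pow (n := 3) hq (by norm_num)

lemma pow_three_rpow_two_div_three {t : ℝ} (ht : 0 ≤ t) : (t ^ 3) ^ ((2 : ℝ) / 3) = t ^ 2 := by
  rw [← Real.rpow_natCast, ← Real.rpow_mul ht]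
  norm_num

lemma eight_rpow_two_div_three : (8 : ℝ) ^ ((2 : ℝ) / 3) = 4 := by
  rw [show (8 : ℝ) = 2 ^ 3 by norm_num, pow_three_rpow_two_div_three (by norm_num)]
  norm_num

noncomputable def sideTerm (c μ r : ℝ) : ℝ := (2 * μ / (c * r ^ 3 - 2 * μ)) ^ ((2 : ℝ) / 3)

noncomputable def sideFun (a b μ r : ℝ) : ℝ := sideTerm a μ r + sideTerm b μ r

noncomputable def sideThreshold (μ m : ℝ) : ℝ := (9 * μ / (4 * m)) ^ ((1 : ℝ) / 3)

lemma sideThreshold_pos {μ m : ℝ} (hμ : 0 < μ) (hm : 0 < m) : 0 < sideThreshold μ m :=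
  Real.rpow_pos_of_pos (by positivity) _

lemma mul_sideThreshold_pow_three {μ m : ℝ} (hμ : 0 ≤ μ) (hm : 0 < m) :
    m * sideThreshold μ m ^ 3 = 9 * μ / 4 := by
  rw [sideThreshold, rpow_one_div_three_pow_three (by positivity)]
  field_simp

lemma le_mul_pow_three_of_sideThreshold_le {μ m c r : ℝ} (hμ : 0 ≤ μ) (hm : 0 < m) (hmc : m ≤ c)
    (hr : sideThreshold μ m ≤ r) : 9 * μ / 4 ≤ c * r ^ 3 := by
  have h0 : 0 ≤ sideThreshold μ m := Real.rpow_nonneg (by positivity) _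
  calc 9 * μ / 4 = m * sideThreshold μ m ^ 3 := (mul_sideThreshold_pow_three hμ hm).symm
    _ ≤ c * r ^ 3 := by gcongr; linarith

lemma sideTerm_lt_sideTerm {c μ r₁ r₂ : ℝ} (hμ : 0 < μ) (hr₁ : 0 < r₁) (h : 2 * μ < c * r₁ ^ 3)
    (hlt : r₁ < r₂) : sideTerm c μ r₂ < sideTerm c μ r₁ := by
  have hc : 0 < c := pos_of_mul_pos_left (by linarith) (pow_pos hr₁ 3).le
  have h3 : c * r₁ ^ 3 < c * r₂ ^ 3 := by gcongr
  apply Real.rpow_lt_rpow (div_nonneg (by linarith) (by linarith)) _ (by norm_num)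
  exact div_lt_div_of_pos_left (by positivity) (by linarith) (by linarith)

lemma sideTerm_le_one {c μ r : ℝ} (hμ : 0 < μ) (h : 4 * μ ≤ c * r ^ 3) : sideTerm c μ r ≤ 1 := by
  have hbase : 2 * μ / (c * r ^ 3 - 2 * μ) ≤ 1 := by
    rw [div_le_one (by linarith)]
    linarith
  exact Real.rpow_le_one (div_nonneg (by linarith) (by linarith)) hbase (by norm_num)

lemma sideTerm_sideThreshold {μ m : ℝ} (hμ : 0 < μ) (hm : 0 < m) :
    sideTerm m μ (sideThreshold μ m) = 4 := by
  rw [sideTerm, mul_sideThreshold_pow_three hμ.le hm,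
    show 2 * μ / (9 * μ / 4 - 2 * μ) = 8 by field_simp; ring, eight_rpow_two_div_three]

section sideFun

variable {a b μ : ℝ}

lemma sideFun_strictAntiOn (ha : 0 < a) (hb : 0 < b) (hμ : 0 < μ) :
    StrictAntiOn (sideFun a b μ) (Set.Ioi (sideThreshold μ (min a b))) := by
  intro r₁ hr₁ r₂ _ hlt
  have hm : 0 < min a b := lt_min ha hb
  have hr₁pos : 0 < r₁ := (sideThreshold_pos hμ hm).trans hr₁
  have hbound {c : ℝ} (hc : min a b ≤ c) : 2 * μ < c * r₁ ^ 3 := by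
    linarith [le_mul_pow_three_of_sideThreshold_le hμ.le hm hc hr₁.le]
  exact add_lt_add (sideTerm_lt_sideTerm hμ hr₁pos (hbound (min_le_left a b)) hlt)
    (sideTerm_lt_sideTerm hμ hr₁pos (hbound (min_le_right a b)) hlt)

lemma four_lt_sideFun_sideThreshold (ha : 0 < a) (hb : 0 < b) (hμ : 0 < μ) :
    4 < sideFun a b μ (sideThreshold μ (min a b)) := by
  have hm : 0 < min a b := lt_min ha hb
  have hpos {c : ℝ} (hc : min a b ≤ c) : 0 < sideTerm c μ (sideThreshold μ (min a b)) := by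
    have := le_mul_pow_three_of_sideThreshold_le hμ.le hm hc le_rfl
    exact Real.rpow_pos_of_pos (div_pos (by linarith) (by linarith)) _
  have h4 := sideTerm_sideThreshold hμ hm
  set r₀ := sideThreshold μ (min a b)
  rw [sideFun]
  rcases min_choice a b with h | h
  · rw [h] at h4
    linarith [hpos (min_le_right a b)]
  · rw [h] at h4
    linarith [hpos (min_le_left a b)]

lemma sideFun_two_mul_sideThreshold_lt_four (ha : 0 < a) (hb : 0 < b) (hμ : 0 < μ) :
    sideFun a b μ (2 * sideThreshold μ (min a b)) < 4 := by
  have hm : 0 < min a b := lt_min ha hb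
  have hle {c : ℝ} (hc : min a b ≤ c) : sideTerm c μ (2 * sideThreshold μ (min a b)) ≤ 1 := by
    have := le_mul_pow_three_of_sideThreshold_le hμ.le hm hc le_rfl
    exact sideTerm_le_one hμ (by linarith)
  rw [sideFun]
  linarith [hle (min_le_left a b), hle (min_le_right a b)]

lemma continuousOn_sideFun (ha : 0 < a) (hb : 0 < b) (hμ : 0 < μ) :
    ContinuousOn (sideFun a b μ) (Set.Ici (sideThreshold μ (min a b))) := by
  have hm : 0 < min a b := lt_min ha hb
  have hterm {c : ℝ} (hc : min a b ≤ c) :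
      ContinuousOn (sideTerm c μ) (Set.Ici (sideThreshold μ (min a b))) := by
    refine ContinuousOn.rpow_const (continuousOn_const.div (by fun_prop) fun r hr => ?_)
      fun _ _ => Or.inr (by norm_num)
    linarith [le_mul_pow_three_of_sideThreshold_le hμ.le hm hc hr]
  exact (hterm (min_le_left a b)).add (hterm (min_le_right a b))

lemma exists_sideFun_eq_four (ha : 0 < a) (hb : 0 < b) (hμ : 0 < μ) :
    ∃ r, sideThreshold μ (min a b) < r ∧ sideFun a b μ r = 4 := by
  have hr₀ := sideThreshold_pos hμ (lt_min ha hb)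
  obtain ⟨r, hr, hr4⟩ := intermediate_value_Ioo' (by linarith)
    ((continuousOn_sideFun ha hb hμ).mono Set.Icc_subset_Ici_self)
    ⟨sideFun_two_mul_sideThreshold_lt_four ha hb hμ, four_lt_sideFun_sideThreshold ha hb hμ⟩
  exact ⟨r, hr.1, hr4⟩

end sideFun

lemma exists_halfDiagonal {c μ r : ℝ} (hμ : 0 < μ) (hr : 0 < r) (h : 2 * μ < c * r ^ 3) :
    ∃ x > 0, c = 2 * μ / r ^ 3 + μ / (4 * x ^ 3) ∧ sideTerm c μ r = 4 * (x / r) ^ 2 := by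
  have hA : 0 < c * r ^ 3 - 2 * μ := by linarith
  set t := (μ / (4 * (c * r ^ 3 - 2 * μ))) ^ ((1 : ℝ) / 3)
  have ht : 0 < t := Real.rpow_pos_of_pos (by positivity) _
  have ht3 : t ^ 3 = μ / (4 * (c * r ^ 3 - 2 * μ)) := rpow_one_div_three_pow_three (by positivity)
  refine ⟨r * t, by positivity, ?_, ?_⟩
  · rw [mul_pow, ht3]
    field_simp
    ring
  · rw [sideTerm, show 2 * μ / (c * r ^ 3 - 2 * μ) = 8 * t ^ 3 by rw [ht3]; field_simp; ring,
      Real.mul_rpow (by norm_num) (by positivity), eight_rpow_two_div_three,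
      pow_three_rpow_two_div_three ht.le]
    field_simp

theorem stmt17_general (a b μ : ℝ) (ha : 0 < a) (hb : 0 < b) (hμ : 0 < μ) :
    ∃ x > (0 : ℝ), ∃ y > (0 : ℝ),
      AnisoCC a b (fun _ : Fin 4 => μ) ![pt x 0, pt 0 y, pt (-x) 0, pt 0 (-y)] ∧
      ((8 * (y / x) ^ 3 + (y / x * Real.sqrt (1 + (y / x) ^ 2)) ^ 3) /
          (8 * (y / x) ^ 3 + (Real.sqrt (1 + (y / x) ^ 2)) ^ 3) = a / b ∧
        ∀ κ : ℝ, 0 < κ →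
          (8 * κ ^ 3 + (κ * Real.sqrt (1 + κ ^ 2)) ^ 3) /
            (8 * κ ^ 3 + (Real.sqrt (1 + κ ^ 2)) ^ 3) = a / b → κ = y / x) ∧
      ((9 * μ / (4 * min a b)) ^ ((1 : ℝ) / 3) < Real.sqrt (x ^ 2 + y ^ 2) ∧
        (2 * μ / (a * Real.sqrt (x ^ 2 + y ^ 2) ^ 3 - 2 * μ)) ^ ((2 : ℝ) / 3) +
          (2 * μ / (b * Real.sqrt (x ^ 2 + y ^ 2) ^ 3 - 2 * μ)) ^ ((2 : ℝ) / 3) = 4 ∧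
        ∀ r : ℝ, (9 * μ / (4 * min a b)) ^ ((1 : ℝ) / 3) < r →
          (2 * μ / (a * r ^ 3 - 2 * μ)) ^ ((2 : ℝ) / 3) +
            (2 * μ / (b * r ^ 3 - 2 * μ)) ^ ((2 : ℝ) / 3) = 4 →
          r = Real.sqrt (x ^ 2 + y ^ 2)) := by
  have hm : 0 < min a b := lt_min ha hb
  obtain ⟨r, hr₀, hr4⟩ := exists_sideFun_eq_four ha hb hμ
  have hr : 0 < r := (sideThreshold_pos hμ hm).trans hr₀
  have hbound {c : ℝ} (hc : min a b ≤ c) : 2 * μ < c * r ^ 3 := by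
    linarith [le_mul_pow_three_of_sideThreshold_le hμ.le hm hc hr₀.le]
  obtain ⟨x, hx, hax, hsa⟩ := exists_halfDiagonal hμ hr (hbound (min_le_left a b))
  obtain ⟨y, hy, hby, hsb⟩ := exists_halfDiagonal hμ hr (hbound (min_le_right a b))
  have hxy : x ^ 2 + y ^ 2 = r ^ 2 := by
    rw [sideFun, hsa, hsb] at hr4
    field_simp at hr4
    linarith
  have hratio : rhombusRatio (y / x) = a / b := by
    rw [rhombusRatio_of_side hμ hx hy hr hxy, ← hax, ← hby]
  refine ⟨x, hx, y, hy, ?_⟩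
  rw [hxy, Real.sqrt_sq hr.le]
  refine ⟨anisoCC_rhombus hx hy hr hxy hax hby, ⟨hratio, ?_⟩, hr₀, hr4, ?_⟩
  · exact fun κ hκ hκr => rhombusRatio_strictMonoOn.injOn hκ (div_pos hy hx) (hκr.trans hratio.symm)
  · exact fun r' hr' hr'4 => (sideFun_strictAntiOn ha hb hμ).injOn hr' hr₀ (hr'4.trans hr4.symm)

/-- for `a, b > 0` and four equal masses `μ = 1/4`, there is an anisotropic
central configuration forming a rhombus `(±x, 0), (0, ±y)` symmetric with respect to both
coordinate axes; the ratio of half-diagonals `κ = y/x` is the unique positive solution of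
`(8κ³ + (κ√(1+κ²))³)/(8κ³ + (√(1+κ²))³) = a/b`, the side `r = √(x²+y²)` satisfies
`r > (9μ/(4 min{a,b}))^{1/3}`, and in that range `r` is the unique solution of
`(2μ/(ar³−2μ))^{2/3} + (2μ/(br³−2μ))^{2/3} = 4`. -/
theorem stmt17 (a b μ : ℝ) (ha : 0 < a) (hb : 0 < b) (hμ : 0 < μ) (hμ1 : 4 * μ = 1) :
    ∃ x > (0 : ℝ), ∃ y > (0 : ℝ),
      AnisoCC a b (fun _ : Fin 4 => μ) ![pt x 0, pt 0 y, pt (-x) 0, pt 0 (-y)] ∧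
      ((8 * (y / x) ^ 3 + (y / x * Real.sqrt (1 + (y / x) ^ 2)) ^ 3) /
          (8 * (y / x) ^ 3 + (Real.sqrt (1 + (y / x) ^ 2)) ^ 3) = a / b ∧
        ∀ κ : ℝ, 0 < κ →
          (8 * κ ^ 3 + (κ * Real.sqrt (1 + κ ^ 2)) ^ 3) /
            (8 * κ ^ 3 + (Real.sqrt (1 + κ ^ 2)) ^ 3) = a / b → κ = y / x) ∧
      ((9 * μ / (4 * min a b)) ^ ((1 : ℝ) / 3) < Real.sqrt (x ^ 2 + y ^ 2) ∧
        (2 * μ / (a * Real.sqrt (x ^ 2 + y ^ 2) ^ 3 - 2 * μ)) ^ ((2 : ℝ) / 3) +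
          (2 * μ / (b * Real.sqrt (x ^ 2 + y ^ 2) ^ 3 - 2 * μ)) ^ ((2 : ℝ) / 3) = 4 ∧
        ∀ r : ℝ, (9 * μ / (4 * min a b)) ^ ((1 : ℝ) / 3) < r →
          (2 * μ / (a * r ^ 3 - 2 * μ)) ^ ((2 : ℝ) / 3) +
            (2 * μ / (b * r ^ 3 - 2 * μ)) ^ ((2 : ℝ) / 3) = 4 →
          r = Real.sqrt (x ^ 2 + y ^ 2)) :=
  stmt17_general a b μ ha hb hμ
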